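/- Let D, Γ̂ (:= γ) ∈ ℝ with D > 0, and let A : ℝ² → ℝ and ρ : ℝ² → ℝ be three times continuously differentiable with A(x) > 0 for all x. For Δt > 0 set h = √(DΔt), define T_h(y) = Σ_{j ∈ {±1,±2}} A(y + h e_j), and define the one-step density update at x ∈ ℝ² by ρ⁺_{Δt}(x) = A(x) · Σ_{i ∈ {±1,±2}} [ ρ(x + h e_i)·e^{−A(x + h e_i)Δt} / T_h(x + h e_i) ] + γΔt. Then for every x ∈ ℝ², lim_{Δt → 0⁺} (ρ⁺_{Δt}(x) − ρ(x))/Δt = (D/4)·∇·(∇ρ − (2ρ/A)∇A)(x) − ρ(x)·A(x) + γ. -/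

import Mathlib

/-!
With `h = √(D Δt)` the update reads `ρ⁺ = Φ(h) + γ Δt`. Each factor of `Φ` is a `C²` function
of `h` along a line `s ↦ x + s • v`, so the second-order jet of `Φ` at `0` follows from the
product, quotient and chain rules for jets. The four hop directions come in opposite pairs, so
`Φ(0) = ρ(x)` and `Φ'(0) = 0`; hence `(ρ⁺ - ρ)/Δt = D (Φ(h) - Φ(0))/h² + γ → D Φ''(0)/2 + γ` by
l'Hôpital, and `D Φ''(0)/2` is the drift-diffusion operator. The second derivatives of `A` in the
directions `v ± e₁, v ± e₂` add up to `4 ∂ᵥ²A + 2 ΔA`, the mixed terms cancelling in pairs.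
-/

/-- First partial derivative of `f : ℝ² → ℝ` (direction `e₁`). -/
noncomputable def pd1 (f : ℝ × ℝ → ℝ) (x : ℝ × ℝ) : ℝ := fderiv ℝ f x (1, 0)

/-- Second partial derivative of `f : ℝ² → ℝ` (direction `e₂`). -/
noncomputable def pd2 (f : ℝ × ℝ → ℝ) (x : ℝ × ℝ) : ℝ := fderiv ℝ f x (0, 1)

open Filter Topology

def HasJet2At (f : ℝ → ℝ) (a b c t : ℝ) : Prop :=
  f t = a ∧ ∃ f' : ℝ → ℝ, (∀ᶠ s in 𝓝 t, HasDerivAt f (f' s) s) ∧ f' t = b ∧ HasDerivAt f' c t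

theorem hasJet2At_const (k t : ℝ) : HasJet2At (fun _ => k) k 0 0 t :=
  ⟨rfl, fun _ => 0, .of_forall fun s => hasDerivAt_const s k, rfl, hasDerivAt_const t 0⟩

theorem hasJet2At_sq (t : ℝ) : HasJet2At (fun s => s ^ 2) (t ^ 2) (2 * t) 2 t := by
  refine ⟨rfl, fun s => 2 * s, .of_forall fun s => ?_, rfl, ?_⟩
  · simpa using hasDerivAt_pow 2 s
  · simpa using (hasDerivAt_id t).const_mul 2

theorem hasJet2At_exp (t : ℝ) : HasJet2At Real.exp (Real.exp t) (Real.exp t) (Real.exp t) t :=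
  ⟨rfl, Real.exp, .of_forall Real.hasDerivAt_exp, rfl, Real.hasDerivAt_exp t⟩

theorem hasJet2At_inv {t : ℝ} (ht : t ≠ 0) :
    HasJet2At (fun s => s⁻¹) t⁻¹ (-(t ^ 2)⁻¹) (2 * (t ^ 3)⁻¹) t := by
  refine ⟨rfl, fun s => -(s ^ 2)⁻¹, ?_, rfl, ?_⟩
  · filter_upwards [eventually_ne_nhds ht] with s hs using hasDerivAt_inv hs
  · refine ((hasDerivAt_pow 2 t).inv (pow_ne_zero 2 ht)).fun_neg.congr_deriv ?_
    field_simp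
    ring

namespace HasJet2At

variable {f g : ℝ → ℝ} {a b c a' b' c' t : ℝ}

theorem add (hf : HasJet2At f a b c t) (hg : HasJet2At g a' b' c' t) :
    HasJet2At (fun s => f s + g s) (a + a') (b + b') (c + c') t := by
  obtain ⟨rfl, f', hf', rfl, hf''⟩ := hf
  obtain ⟨rfl, g', hg', rfl, hg''⟩ := hg
  refine ⟨rfl, fun s => f' s + g' s, ?_, rfl, hf''.add hg''⟩
  filter_upwards [hf', hg'] with s h₁ h₂ using h₁.add h₂

theorem mul (hf : HasJet2At f a b c t) (hg : HasJet2At g a' b' c' t) :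
    HasJet2At (fun s => f s * g s) (a * a') (b * a' + a * b')
      (c * a' + 2 * b * b' + a * c') t := by
  obtain ⟨rfl, f', hf', rfl, hf''⟩ := hf
  obtain ⟨rfl, g', hg', rfl, hg''⟩ := hg
  refine ⟨rfl, fun s => f' s * g s + f s * g' s, ?_, rfl, ?_⟩
  · filter_upwards [hf', hg'] with s h₁ h₂ using h₁.mul h₂
  · exact ((hf''.fun_mul hg'.self_of_nhds).fun_add (hf'.self_of_nhds.fun_mul hg'')).congr_deriv
      (by ring)

theorem comp (hg : HasJet2At g a' b' c' a) (hf : HasJet2At f a b c t) :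
    HasJet2At (fun s => g (f s)) a' (b' * b) (c' * b ^ 2 + b' * c) t := by
  obtain ⟨rfl, f', hf', rfl, hf''⟩ := hf
  obtain ⟨rfl, g', hg', rfl, hg''⟩ := hg
  have hf_deriv : HasDerivAt f (f' t) t := hf'.self_of_nhds
  refine ⟨rfl, fun s => g' (f s) * f' s, ?_, rfl, ?_⟩
  · filter_upwards [hf', hf_deriv.continuousAt.tendsto.eventually hg'] with s h₁ h₂
      using h₂.comp s h₁
  · exact ((hg''.comp t hf_deriv).fun_mul hf'').congr_deriv (by simp; ring)

theorem const_mul (k : ℝ) (hf : HasJet2At f a b c t) :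
    HasJet2At (fun s => k * f s) (k * a) (k * b) (k * c) t := by
  simpa using (hasJet2At_const k t).mul hf

theorem neg (hf : HasJet2At f a b c t) : HasJet2At (fun s => -f s) (-a) (-b) (-c) t := by
  simpa using hf.const_mul (-1)

theorem div_const (hf : HasJet2At f a b c t) (k : ℝ) :
    HasJet2At (fun s => f s / k) (a / k) (b / k) (c / k) t := by
  simpa [div_eq_inv_mul] using hf.const_mul k⁻¹

theorem div (hf : HasJet2At f a b c t) (hg : HasJet2At g a' b' c' t) (ha' : a' ≠ 0) :
    HasJet2At (fun s => f s / g s) (a / a') ((b * a' - a * b') / a' ^ 2)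
      (c / a' - 2 * b * b' / a' ^ 2 - a * c' / a' ^ 2 + 2 * a * b' ^ 2 / a' ^ 3) t := by
  convert hf.mul ((hasJet2At_inv ha').comp hg) using 1
  · simp only [div_eq_mul_inv]
  · ring
  · field_simp
    ring
  · field_simp
    ring

theorem tendsto_sub_div_sq (hf : HasJet2At f a 0 c 0) :
    Tendsto (fun h => (f h - a) / h ^ 2) (𝓝[≠] 0) (𝓝 (c / 2)) := by
  obtain ⟨rfl, f', hf', hf'0, hf''⟩ := hf
  have hcont : ContinuousAt f 0 := hf'.self_of_nhds.continuousAt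
  refine HasDerivAt.lhopital_zero_nhdsNE (f' := f') (g' := fun h => 2 * h)
    (eventually_nhdsWithin_of_eventually_nhds (hf'.mono fun s hs => hs.sub_const _))
    (.of_forall fun s => by simpa using hasDerivAt_pow 2 s)
    (eventually_nhdsWithin_of_forall fun s hs => mul_ne_zero two_ne_zero hs) ?_ ?_ ?_
  · simpa using (hcont.sub_const (f 0)).mono_left nhdsWithin_le_nhds
  · exact tendsto_nhdsWithin_of_tendsto_nhds (by simpa using (continuous_pow 2).tendsto (0 : ℝ))
  · refine ((hasDerivAt_iff_tendsto_slope.mp hf'').div_const 2).congr'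
      (eventually_nhdsWithin_of_forall fun h hh => ?_)
    simp [slope_def_field, hf'0]
    field_simp

end HasJet2At

section Line

variable {E : Type*} [NormedAddCommGroup E] [NormedSpace ℝ E] {F : E → ℝ} {x v : E}

theorem differentiable_fderiv_of_contDiff_two (hF : ContDiff ℝ 2 F) :
    Differentiable ℝ (fderiv ℝ F) :=
  (hF.fderiv_right (m := 1) (by norm_num)).differentiable (by norm_num)

theorem hasDerivAt_comp_line {t : ℝ} (hF : DifferentiableAt ℝ F (x + t • v)) :
    HasDerivAt (fun s => F (x + s • v)) (fderiv ℝ F (x + t • v) v) t := by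
  refine hF.hasFDerivAt.comp_hasDerivAt t ?_
  simpa using ((hasDerivAt_id t).smul_const v).const_add x

theorem fderiv_fderiv_apply_const (hF : DifferentiableAt ℝ (fderiv ℝ F) x) (v w : E) :
    fderiv ℝ (fun y => fderiv ℝ F y v) x w = fderiv ℝ (fderiv ℝ F) x w v := by
  simp [fderiv_clm_apply hF (differentiableAt_const v)]

theorem hasJet2At_comp_line (hF : ContDiff ℝ 2 F) (x v : E) :
    HasJet2At (fun s => F (x + s • v)) (F x) (fderiv ℝ F x v)
      (fderiv ℝ (fderiv ℝ F) x v v) 0 := by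
  have hF₂ := differentiable_fderiv_of_contDiff_two hF
  refine ⟨by simp, fun s => fderiv ℝ F (x + s • v) v,
    .of_forall fun s => hasDerivAt_comp_line (hF.differentiable (by norm_num) _), by simp, ?_⟩
  simpa [fderiv_fderiv_apply_const (hF₂ x)] using
    hasDerivAt_comp_line (x := x) (v := v) (t := 0) ((hF₂ _).clm_apply (differentiableAt_const v))

/-- `∂ᵥ` of the `v`-component of the flux `∇ρ - (2ρ/A) ∇A`, expanded. -/
noncomputable def fluxDeriv (A ρ : E → ℝ) (x v : E) : ℝ :=
  fderiv ℝ (fderiv ℝ ρ) x v v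
    - 2 * ((fderiv ℝ ρ x v * A x - ρ x * fderiv ℝ A x v) / A x ^ 2 * fderiv ℝ A x v
      + ρ x / A x * fderiv ℝ (fderiv ℝ A) x v v)

theorem fderiv_driftFlux_apply {A ρ : E → ℝ} (hA : ContDiff ℝ 2 A) (hρ : ContDiff ℝ 2 ρ)
    (hAx : A x ≠ 0) (v : E) :
    fderiv ℝ (fun y => fderiv ℝ ρ y v - 2 * ρ y / A y * fderiv ℝ A y v) x v
      = fluxDeriv A ρ x v := by
  have hρ₁ : DifferentiableAt ℝ ρ x := hρ.differentiable (by norm_num) x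
  have hA₁ : DifferentiableAt ℝ A x := hA.differentiable (by norm_num) x
  have hρ₂ := differentiable_fderiv_of_contDiff_two hρ x
  have hA₂ := differentiable_fderiv_of_contDiff_two hA x
  have hρv : DifferentiableAt ℝ (fun y => fderiv ℝ ρ y v) x :=
    hρ₂.clm_apply (differentiableAt_const v)
  have hAv : DifferentiableAt ℝ (fun y => fderiv ℝ A y v) x :=
    hA₂.clm_apply (differentiableAt_const v)
  have hline {G : E → ℝ} (hG : DifferentiableAt ℝ G x) :
      HasDerivAt (fun s : ℝ => G (x + s • v)) (fderiv ℝ G x v) 0 := by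
    simpa using hasDerivAt_comp_line (t := 0) (x := x) (v := v) (by simpa using hG)
  have hflux : DifferentiableAt ℝ
      (fun y => fderiv ℝ ρ y v - 2 * ρ y / A y * fderiv ℝ A y v) x := by
    fun_prop (disch := assumption)
  have hflux_line := (hline hρv).fun_sub
    ((((hline hρ₁).const_mul 2).fun_div (hline hA₁) (by simpa using hAx)).fun_mul (hline hAv))
  rw [(hline hflux).unique hflux_line, fderiv_fderiv_apply_const hρ₂,
    fderiv_fderiv_apply_const hA₂]
  simp only [fluxDeriv, zero_smul, add_zero]
  field_simp

end Line

section Model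

variable (A ρ : ℝ × ℝ → ℝ)

/-- `T_h(y)`. -/
def neighbourSum (h : ℝ) (y : ℝ × ℝ) : ℝ :=
  A (y.1 + h, y.2) + A (y.1 - h, y.2) + A (y.1, y.2 + h) + A (y.1, y.2 - h)

noncomputable def hopFlux (h τ : ℝ) (y : ℝ × ℝ) : ℝ :=
  ρ y * Real.exp (-A y * τ) / neighbourSum A h y

/-- `ρ⁺_Δt(x) - γ Δt`, with the spacing `h` and the time step `τ` as independent parameters. -/
noncomputable def arrivals (h τ : ℝ) (x : ℝ × ℝ) : ℝ :=
  A x * (hopFlux A ρ h τ (x.1 + h, x.2) + hopFlux A ρ h τ (x.1 - h, x.2)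
    + hopFlux A ρ h τ (x.1, x.2 + h) + hopFlux A ρ h τ (x.1, x.2 - h))

variable {A ρ} {x : ℝ × ℝ}

theorem neighbourSum_add_smul (h : ℝ) (x v : ℝ × ℝ) :
    neighbourSum A h (x + h • v) = A (x + h • (v + (1, 0))) + A (x + h • (v - (1, 0)))
      + A (x + h • (v + (0, 1))) + A (x + h • (v - (0, 1))) := by
  have hpt (a b : ℝ) : x + h • (v + (a, b)) = ((x + h • v).1 + h * a, (x + h • v).2 + h * b) := by
    ext <;> simp <;> ring
  simp only [neighbourSum, sub_eq_add_neg, Prod.neg_mk, neg_zero, hpt, mul_one, mul_zero, add_zero,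
    mul_neg]

theorem arrivals_eq_sum_hopFlux (h τ : ℝ) (x : ℝ × ℝ) :
    arrivals A ρ h τ x = A x * (hopFlux A ρ h τ (x + h • (1, 0))
      + hopFlux A ρ h τ (x + h • -(1, 0)) + hopFlux A ρ h τ (x + h • (0, 1))
      + hopFlux A ρ h τ (x + h • -(0, 1))) := by
  have hpt (a b : ℝ) : x + h • ((a, b) : ℝ × ℝ) = (x.1 + h * a, x.2 + h * b) := rfl
  simp only [arrivals, Prod.neg_mk, neg_zero, hpt, mul_one, mul_zero, add_zero, mul_neg,
    ← sub_eq_add_neg]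

theorem hasJet2At_neighbourSum (hA : ContDiff ℝ 2 A) (x v : ℝ × ℝ) :
    HasJet2At (fun h => neighbourSum A h (x + h • v)) (4 * A x) (4 * fderiv ℝ A x v)
      (4 * fderiv ℝ (fderiv ℝ A) x v v
        + 2 * (fderiv ℝ (fderiv ℝ A) x (1, 0) (1, 0) + fderiv ℝ (fderiv ℝ A) x (0, 1) (0, 1)))
      0 := by
  simp only [neighbourSum_add_smul]
  convert (((hasJet2At_comp_line hA x (v + (1, 0))).add
    (hasJet2At_comp_line hA x (v - (1, 0)))).add (hasJet2At_comp_line hA x (v + (0, 1)))).add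
    (hasJet2At_comp_line hA x (v - (0, 1))) using 1
  · ring
  · simp only [map_add, map_sub]
    ring
  · simp only [map_add, map_sub, add_apply, sub_apply]
    ring

theorem hasJet2At_hopFlux (hA : ContDiff ℝ 2 A) (hρ : ContDiff ℝ 2 ρ) (hAx : A x ≠ 0)
    (D : ℝ) (v : ℝ × ℝ) :
    HasJet2At (fun h => hopFlux A ρ h (h ^ 2 / D) (x + h • v)) (ρ x / (4 * A x))
      ((fderiv ℝ ρ x v * A x - ρ x * fderiv ℝ A x v) / (4 * A x ^ 2))
      ((fderiv ℝ (fderiv ℝ ρ) x v v - 2 * A x * ρ x / D) / (4 * A x)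
        - fderiv ℝ ρ x v * fderiv ℝ A x v / (2 * A x ^ 2)
        - ρ x * (2 * fderiv ℝ (fderiv ℝ A) x v v
          + (fderiv ℝ (fderiv ℝ A) x (1, 0) (1, 0) + fderiv ℝ (fderiv ℝ A) x (0, 1) (0, 1)))
          / (8 * A x ^ 2)
        + ρ x * fderiv ℝ A x v ^ 2 / (2 * A x ^ 3)) 0 := by
  have hsurvival := (hasJet2At_exp _).comp
    ((hasJet2At_comp_line hA x v).neg.mul ((hasJet2At_sq 0).div_const D))
  convert ((hasJet2At_comp_line hρ x v).mul hsurvival).div (hasJet2At_neighbourSum hA x v)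
    (mul_ne_zero four_ne_zero hAx) using 1
  · rfl
  · simp
  · simp
    field_simp
  · norm_num
    field_simp
    ring

theorem hasJet2At_arrivals (hA : ContDiff ℝ 2 A) (hρ : ContDiff ℝ 2 ρ) (hAx : A x ≠ 0)
    (D : ℝ) :
    HasJet2At (fun h => arrivals A ρ h (h ^ 2 / D) x) (ρ x) 0
      ((fluxDeriv A ρ x (1, 0) + fluxDeriv A ρ x (0, 1)) / 2 - 2 * A x * ρ x / D) 0 := by
  have hdir := hasJet2At_hopFlux hA hρ hAx D
  simp only [arrivals_eq_sum_hopFlux]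
  convert ((((hdir (1, 0)).add (hdir (-(1, 0)))).add (hdir (0, 1))).add
    (hdir (-(0, 1)))).const_mul (A x) using 1
  · field_simp
    ring
  · simp only [map_neg]
    ring
  · simp only [fluxDeriv, map_neg, neg_apply, neg_neg]
    field_simp
    ring

end Model

theorem tendsto_sqrt_const_mul_nhdsGT {D : ℝ} (hD : 0 < D) :
    Tendsto (fun t => √(D * t)) (𝓝[>] 0) (𝓝[≠] 0) := by
  refine tendsto_nhdsWithin_iff.mpr ⟨?_, ?_⟩
  · simpa using ((continuous_const.mul continuous_id).sqrt.tendsto 0).mono_left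
      (nhdsWithin_le_nhds (s := Set.Ioi 0))
  · filter_upwards [self_mem_nhdsWithin] with t ht using (Real.sqrt_pos.mpr (mul_pos hD ht)).ne'

/-- Mean-field limit of the agent-based criminal-number update: with `h = √(DΔt)`,
`T_h(y) = Σ_{j∈{±1,±2}} A(y + h e_j)`, and one-step update
`ρ⁺_Δt(x) = A(x)·Σ_{i∈{±1,±2}} ρ(x+he_i) e^{−A(x+he_i)Δt}/T_h(x+he_i) + γΔt`,
the increment quotient tends, as `Δt → 0⁺`, to
`(D/4)∇·(∇ρ − (2ρ/A)∇A)(x) − ρ(x)A(x) + γ`. -/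
theorem stmt5 (D γ : ℝ) (hD : 0 < D)
    (A ρ : ℝ × ℝ → ℝ) (hA : ContDiff ℝ 3 A) (hρ : ContDiff ℝ 3 ρ)
    (hApos : ∀ x, 0 < A x)
    (T : ℝ → (ℝ × ℝ) → ℝ)
    (hT : T = fun h y =>
      A (y.1 + h, y.2) + A (y.1 - h, y.2) + A (y.1, y.2 + h) + A (y.1, y.2 - h))
    (ρplus : ℝ → (ℝ × ℝ) → ℝ)
    (hρplus : ρplus = fun Δt x =>
      A x * (ρ (x.1 + Real.sqrt (D * Δt), x.2)
                * Real.exp (-A (x.1 + Real.sqrt (D * Δt), x.2) * Δt)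
                / T (Real.sqrt (D * Δt)) (x.1 + Real.sqrt (D * Δt), x.2)
           + ρ (x.1 - Real.sqrt (D * Δt), x.2)
                * Real.exp (-A (x.1 - Real.sqrt (D * Δt), x.2) * Δt)
                / T (Real.sqrt (D * Δt)) (x.1 - Real.sqrt (D * Δt), x.2)
           + ρ (x.1, x.2 + Real.sqrt (D * Δt))
                * Real.exp (-A (x.1, x.2 + Real.sqrt (D * Δt)) * Δt)
                / T (Real.sqrt (D * Δt)) (x.1, x.2 + Real.sqrt (D * Δt))
           + ρ (x.1, x.2 - Real.sqrt (D * Δt))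
                * Real.exp (-A (x.1, x.2 - Real.sqrt (D * Δt)) * Δt)
                / T (Real.sqrt (D * Δt)) (x.1, x.2 - Real.sqrt (D * Δt)))
        + γ * Δt)
    (x : ℝ × ℝ) :
    Filter.Tendsto (fun Δt : ℝ => (ρplus Δt x - ρ x) / Δt)
      (nhdsWithin (0 : ℝ) (Set.Ioi 0))
      (nhds (D / 4 *
          (pd1 (fun y => pd1 ρ y - 2 * ρ y / A y * pd1 A y) x
            + pd2 (fun y => pd2 ρ y - 2 * ρ y / A y * pd2 A y) x)
        - ρ x * A x + γ)) := by
  subst hT hρplus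
  have hA₂ : ContDiff ℝ 2 A := hA.of_le (by norm_num)
  have hρ₂ : ContDiff ℝ 2 ρ := hρ.of_le (by norm_num)
  have hAx : A x ≠ 0 := (hApos x).ne'
  have hlim := (((hasJet2At_arrivals hA₂ hρ₂ hAx D).tendsto_sub_div_sq.comp
    (tendsto_sqrt_const_mul_nhdsGT hD)).const_mul D).add_const γ
  convert hlim.congr' ?_ using 2
  · simp only [pd1, pd2, fderiv_driftFlux_apply hA₂ hρ₂ hAx]
    field_simp
    ring
  · filter_upwards [self_mem_nhdsWithin] with Δt hΔt
    have hΔt₀ : Δt ≠ 0 := ne_of_gt hΔt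
    have hh : √(D * Δt) ^ 2 = D * Δt := Real.sq_sqrt (mul_pos hD hΔt).le
    have hstep : √(D * Δt) ^ 2 / D = Δt := by
      rw [hh]
      field_simp
    rw [Function.comp_apply, hstep, hh]
    change _ = (arrivals A ρ √(D * Δt) Δt x + γ * Δt - ρ x) / Δt
    field_simp
    ring
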